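/- arXiv:2402.17578 — 2 statements merged into one kernel-verified Lean document; each statement's English description precedes it below -/
import Mathlib

section
/- Let ω be a weight function with constant K from condition (α) (so ω(t₁+t₂) ≤ K(1+ω(t₁)+ω(t₂))). Then for every μ ≥ 0, 1 ≤ p ≤ ∞, and Schwartz f, g, one has sup_{x,ξ} e^{μω(x)} |V_g f(x,ξ)| ≤ e^{Kμ} ‖e^{Kμω} f‖_p ‖e^{Kμω} g‖_{p'}, where p' is the conjugate exponent of p. -/
open MeasureTheory Complex ENNReal

noncomputable section

abbrev RN (N : ℕ) := Fin N → ℝ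

def dotR {N : ℕ} (x y : RN N) : ℝ := ∑ i, x i * y i

def stft {N : ℕ} (g f : RN N → ℂ) (x ξ : RN N) : ℂ :=
  ∫ y, f y * (starRingEnd ℂ) (g (y - x)) * Complex.exp (-(Complex.I * (dotR y ξ : ℂ)))

def ftr {N : ℕ} (f : RN N → ℂ) (ξ : RN N) : ℂ :=
  ∫ x, Complex.exp (-(Complex.I * (dotR x ξ : ℂ))) * f x

def rihaczek {N : ℕ} (f : RN N → ℂ) (x ξ : RN N) : ℂ :=
  Complex.exp (-(Complex.I * (dotR x ξ : ℂ))) * f x * (starRingEnd ℂ) (ftr f ξ)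

def spec {N : ℕ} (g f : RN N → ℂ) (x ξ : RN N) : ℝ := ‖stft g f x ξ‖ ^ 2

def wig {N : ℕ} (τ : ℝ) (f : RN N → ℂ) (x ξ : RN N) : ℂ :=
  ∫ t, Complex.exp (-(Complex.I * (dotR t ξ : ℂ))) * f (x + τ • t) *
    (starRingEnd ℂ) (f (x - (1 - τ) • t))

structure WeightFunction where
  w : ℝ → ℝ
  K : ℝ
  a : ℝ
  b : ℝ
  oneLeK : 1 ≤ K
  bpos : 0 < b
  cont : Continuous w
  mono : MonotoneOn w (Set.Ici 0)
  nonneg : ∀ t, 0 ≤ w t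
  alpha : ∀ t, 0 ≤ t → w (2 * t) ≤ K * (1 + w t)
  beta : Filter.Tendsto (fun t => w t / t) Filter.atTop (nhds 0)
  gamma : ∀ t, 0 ≤ t → a + b * Real.log (1 + t) ≤ w t
  delta : ConvexOn ℝ Set.univ (fun t => w (Real.exp t))
  subadd : ∀ s t, 0 ≤ s → 0 ≤ t → w (s + t) ≤ K * (1 + w s + w t)

def wnorm (W : WeightFunction) (lam : ℝ) {E : Type*} [NormedAddCommGroup E]
    [MeasurableSpace E] (μ : Measure E) {F : Type*} [NormedAddCommGroup F]
    (f : E → F) (p : ℝ≥0∞) : ℝ≥0∞ :=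
  eLpNorm (fun t => Real.exp (lam * W.w ‖t‖) * ‖f t‖) p μ

def SOmega {N : ℕ} (W : WeightFunction) (f : RN N → ℂ) : Prop :=
  ∀ lam : ℝ, 0 < lam →
    (∃ C, ∀ x, Real.exp (lam * W.w ‖x‖) * ‖f x‖ ≤ C) ∧
    (∃ C, ∀ ξ, Real.exp (lam * W.w ‖ξ‖) * ‖ftr f ξ‖ ≤ C)

def elpN {α : Type*} [MeasurableSpace α] (μ : Measure α) (h : α → ℝ≥0∞) (p : ℝ≥0∞) : ℝ≥0∞ :=
  if p = ∞ then essSup h μ else (∫⁻ z, (h z) ^ p.toReal ∂μ) ^ (1 / p.toReal)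

end

/-! Since `‖x‖ ≤ ‖y‖ + ‖y - x‖`, monotonicity and subadditivity of `ω` split the weight as
`e^{μω(x)} ≤ e^{Kμ} e^{Kμω(y)} e^{Kμω(y - x)}` inside the integral defining `V_g f(x, ξ)`; Hölder's
inequality and the translation invariance of Lebesgue measure then bound what remains. -/

namespace WeightFunction

variable (W : WeightFunction) {E : Type*} [SeminormedAddCommGroup E]

theorem w_norm_le (x y : E) : W.w ‖x‖ ≤ W.K * (1 + W.w ‖y‖ + W.w ‖y - x‖) := by
  have hxy : ‖x‖ ≤ ‖y‖ + ‖y - x‖ := by simpa using norm_sub_le y (y - x)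
  exact (W.mono (norm_nonneg x) (add_nonneg (norm_nonneg y) (norm_nonneg _)) hxy).trans
    (W.subadd _ _ (norm_nonneg _) (norm_nonneg _))

theorem exp_mul_w_norm_le {μ : ℝ} (hμ : 0 ≤ μ) (x y : E) :
    Real.exp (μ * W.w ‖x‖) ≤
      Real.exp (W.K * μ) * Real.exp (W.K * μ * W.w ‖y‖) * Real.exp (W.K * μ * W.w ‖y - x‖) := by
  rw [← Real.exp_add, ← Real.exp_add, Real.exp_le_exp]
  nlinarith [mul_le_mul_of_nonneg_left (W.w_norm_le x y) hμ]

theorem ofReal_exp_mul_enorm_mul_le {μ : ℝ} (hμ : 0 ≤ μ) (x y : E) {F : Type*}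
    [SeminormedAddCommGroup F] (a b : F) :
    ENNReal.ofReal (Real.exp (μ * W.w ‖x‖)) * (‖a‖ₑ * ‖b‖ₑ) ≤
      ENNReal.ofReal (Real.exp (W.K * μ)) *
        (‖Real.exp (W.K * μ * W.w ‖y‖) * ‖a‖‖ₑ * ‖Real.exp (W.K * μ * W.w ‖y - x‖) * ‖b‖‖ₑ) := by
  simp only [← ofReal_norm, norm_mul, Real.norm_eq_abs, abs_norm, Real.abs_exp,
    ← ENNReal.ofReal_mul (Real.exp_nonneg _), ← ENNReal.ofReal_mul (norm_nonneg _),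
    ← ENNReal.ofReal_mul (mul_nonneg (Real.exp_nonneg _) (norm_nonneg _))]
  refine ENNReal.ofReal_le_ofReal ?_
  calc Real.exp (μ * W.w ‖x‖) * (‖a‖ * ‖b‖)
      ≤ Real.exp (W.K * μ) * Real.exp (W.K * μ * W.w ‖y‖) *
          Real.exp (W.K * μ * W.w ‖y - x‖) * (‖a‖ * ‖b‖) := by
        gcongr; exact W.exp_mul_w_norm_le hμ x y
    _ = _ := by ring

end WeightFunction

theorem enorm_stft_le {N : ℕ} (g f : RN N → ℂ) (x ξ : RN N) :
    ‖stft g f x ξ‖ₑ ≤ ∫⁻ y, ‖f y‖ₑ * ‖g (y - x)‖ₑ := by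
  refine (enorm_integral_le_lintegral_enorm _).trans (le_of_eq (lintegral_congr fun y => ?_))
  have hexp : ‖Complex.exp (-(Complex.I * (dotR y ξ : ℂ)))‖ₑ = 1 := by
    rw [← ofReal_norm, Complex.norm_exp]; simp
  simp [enorm_mul, hexp]

theorem lintegral_enorm_mul_comp_sub_le {E : Type*} [MeasurableSpace E] [AddGroup E]
    [MeasurableAdd E] (μ : Measure E) [μ.IsAddRightInvariant] {F G : E → ℝ}
    (hF : AEStronglyMeasurable F μ) (hG : AEStronglyMeasurable G μ) (x : E)
    {p q : ℝ≥0∞} (hpq : 1 / p + 1 / q = 1) :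
    ∫⁻ y, ‖F y‖ₑ * ‖G (y - x)‖ₑ ∂μ ≤ eLpNorm F p μ * eLpNorm G q μ := by
  have hsub : MeasurePreserving (fun y => y - x) μ μ := measurePreserving_sub_right μ x
  have hGx : AEStronglyMeasurable (fun y => G (y - x)) μ :=
    hG.comp_measurePreserving hsub
  calc ∫⁻ y, ‖F y‖ₑ * ‖G (y - x)‖ₑ ∂μ = eLpNorm ((fun y => G (y - x)) • F) 1 μ := by
        simp [eLpNorm_one_eq_lintegral_enorm, enorm_mul, mul_comm]
    _ ≤ eLpNorm (fun y => G (y - x)) q μ * eLpNorm F p μ :=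
        eLpNorm_smul_le_mul_eLpNorm hF hGx (hpqr := ⟨by simpa [one_div, add_comm] using hpq⟩)
    _ = eLpNorm F p μ * eLpNorm G q μ := by
        rw [mul_comm]; exact congrArg _ (eLpNorm_comp_measurePreserving hG hsub)

theorem stmt3_general {N : ℕ} (W : WeightFunction) (μ : ℝ) (hμ : 0 ≤ μ)
    (p q : ℝ≥0∞) (hpq : 1 / p + 1 / q = 1)
    (f g : SchwartzMap (RN N) ℂ) (x ξ : RN N) :
    ENNReal.ofReal (Real.exp (μ * W.w ‖x‖) * ‖stft ⇑g ⇑f x ξ‖) ≤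
      ENNReal.ofReal (Real.exp (W.K * μ)) *
      wnorm W (W.K * μ) MeasureTheory.volume ⇑f p *
      wnorm W (W.K * μ) MeasureTheory.volume ⇑g q := by
  have hweight : Continuous fun t : RN N => Real.exp (W.K * μ * W.w ‖t‖) :=
    Real.continuous_exp.comp (continuous_const.mul (W.cont.comp continuous_norm))
  set F : RN N → ℝ := fun t => Real.exp (W.K * μ * W.w ‖t‖) * ‖f t‖
  set G : RN N → ℝ := fun t => Real.exp (W.K * μ * W.w ‖t‖) * ‖g t‖
  rw [ENNReal.ofReal_mul (Real.exp_nonneg _), ofReal_norm, mul_assoc]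
  calc ENNReal.ofReal (Real.exp (μ * W.w ‖x‖)) * ‖stft g f x ξ‖ₑ
      ≤ ∫⁻ y, ENNReal.ofReal (Real.exp (μ * W.w ‖x‖)) * (‖f y‖ₑ * ‖g (y - x)‖ₑ) := by
        rw [lintegral_const_mul' _ _ ENNReal.ofReal_ne_top]
        gcongr
        exact enorm_stft_le g f x ξ
    _ ≤ ∫⁻ y, ENNReal.ofReal (Real.exp (W.K * μ)) * (‖F y‖ₑ * ‖G (y - x)‖ₑ) :=
        lintegral_mono fun y => W.ofReal_exp_mul_enorm_mul_le hμ x y (f y) (g (y - x))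
    _ ≤ _ := by
        rw [lintegral_const_mul' _ _ ENNReal.ofReal_ne_top]
        gcongr
        exact lintegral_enorm_mul_comp_sub_le volume
          (hweight.mul f.continuous.norm).aestronglyMeasurable
          (hweight.mul g.continuous.norm).aestronglyMeasurable x hpq

theorem stmt3 {N : ℕ} (W : WeightFunction) (μ : ℝ) (hμ : 0 ≤ μ)
    (p q : ℝ≥0∞) (hp : 1 ≤ p) (hpq : 1 / p + 1 / q = 1)
    (f g : SchwartzMap (RN N) ℂ) (x ξ : RN N) :
    ENNReal.ofReal (Real.exp (μ * W.w ‖x‖) * ‖stft ⇑g ⇑f x ξ‖) ≤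
      ENNReal.ofReal (Real.exp (W.K * μ)) *
      wnorm W (W.K * μ) MeasureTheory.volume ⇑f p *
      wnorm W (W.K * μ) MeasureTheory.volume ⇑g q :=
  stmt3_general W μ hμ p q hpq f g x ξ
end

section
/- For τ ∈ (0,1) and f ∈ 𝒮(ℝᴺ), the τ-Wigner transform satisfies Wig_τ(f)(x,ξ) = τ^{−N} e^{i x·ξ/τ} V_{A_τ f} f(x/(1−τ), ξ/τ), where (A_τ h)(t) := h((τ−1)t/τ). -/
open MeasureTheory Complex ENNReal

/-! Substituting `y = x + τ t` in the integral defining `V_{A_τ f} f(x/(1-τ), ξ/τ)` turns the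
window argument `((τ-1)/τ)(y - x/(1-τ))` into `x - (1-τ) t` and splits the phase as
`e^{-i x·ξ/τ} e^{-i t·ξ}`, while the Jacobian contributes `τ^N`. Linear changes of variables
hold for the Bochner integral of an arbitrary function, so no decay of `f` is needed. -/

variable {N : ℕ}

lemma dotR_eq_dotProduct (x y : RN N) : dotR x y = x ⬝ᵥ y := rfl

lemma integral_comp_add_smul {E : Type*} [NormedAddCommGroup E] [NormedSpace ℝ E]
    (F : RN N → E) (x : RN N) {c : ℝ} (hc : 0 ≤ c) :
    ∫ t, F (x + c • t) = (c ^ N)⁻¹ • ∫ y, F y := by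
  have hscale := Measure.integral_comp_smul_of_nonneg volume (fun y => F (x + y)) (hR := hc)
  rw [Module.finrank_fin_fun] at hscale
  rw [hscale, integral_add_left_eq_self F x]

section AffineChange

variable {τ : ℝ}

lemma dotR_add_smul_inv_smul (hτ0 : τ ≠ 0) (x t ξ : RN N) :
    dotR (x + τ • t) (τ⁻¹ • ξ) = dotR x ξ / τ + dotR t ξ := by
  simp only [dotR_eq_dotProduct, add_dotProduct, smul_dotProduct, dotProduct_smul,
    smul_eq_mul]
  field_simp

lemma smul_add_smul_sub_inv_smul (hτ0 : τ ≠ 0) (hτ1 : τ ≠ 1) (x t : RN N) :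
    ((τ - 1) / τ) • (x + τ • t - (1 - τ)⁻¹ • x) = x - (1 - τ) • t := by
  have h1τ : 1 - τ ≠ 0 := sub_ne_zero.mpr hτ1.symm
  ext i
  simp only [Pi.smul_apply, Pi.add_apply, Pi.sub_apply, smul_eq_mul]
  field_simp
  ring

end AffineChange

theorem wig_eq_stft_dilation {τ : ℝ} (hτ0 : 0 < τ) (hτ1 : τ ≠ 1) (f : RN N → ℂ) (x ξ : RN N) :
    wig τ f x ξ = ((τ ^ N : ℝ) : ℂ)⁻¹ *
      Complex.exp (Complex.I * ((dotR x ξ / τ : ℝ) : ℂ)) *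
      stft (fun t => f (((τ - 1) / τ) • t)) f ((1 - τ)⁻¹ • x) (τ⁻¹ • ξ) := by
  set φ : ℂ := ((dotR x ξ / τ : ℝ) : ℂ)
  have hstft : stft (fun t => f (((τ - 1) / τ) • t)) f ((1 - τ)⁻¹ • x) (τ⁻¹ • ξ) =
      (τ ^ N : ℝ) • (Complex.exp (-(Complex.I * φ)) * wig τ f x ξ) := by
    rw [stft, ← smul_inv_smul₀ (pow_ne_zero N hτ0.ne') (∫ _, _),
      ← integral_comp_add_smul _ x hτ0.le, wig, ← integral_const_mul]
    congr 1
    refine integral_congr_ae (Filter.Eventually.of_forall fun t => ?_)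
    simp only [smul_add_smul_sub_inv_smul hτ0.ne' hτ1, dotR_add_smul_inv_smul hτ0.ne', φ]
    push_cast
    rw [mul_add, neg_add, Complex.exp_add]
    ring
  have hτN : ((τ ^ N : ℝ) : ℂ) ≠ 0 := by exact_mod_cast pow_ne_zero N hτ0.ne'
  have hphase : Complex.exp (Complex.I * φ) * Complex.exp (-(Complex.I * φ)) = 1 := by
    rw [← Complex.exp_add, add_neg_cancel, Complex.exp_zero]
  rw [hstft, Complex.real_smul]
  calc wig τ f x ξ
      = (((τ ^ N : ℝ) : ℂ)⁻¹ * ((τ ^ N : ℝ) : ℂ)) *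
          (Complex.exp (Complex.I * φ) * Complex.exp (-(Complex.I * φ))) * wig τ f x ξ := by
        rw [inv_mul_cancel₀ hτN, hphase, one_mul, one_mul]
    _ = _ := by ring

theorem stmt8 {N : ℕ} (τ : ℝ) (hτ : τ ∈ Set.Ioo (0 : ℝ) 1)
    (f : SchwartzMap (RN N) ℂ) (x ξ : RN N) :
    wig τ ⇑f x ξ = ((τ ^ N : ℝ) : ℂ)⁻¹ *
      Complex.exp (Complex.I * ((dotR x ξ / τ : ℝ) : ℂ)) *
      stft (fun t => f (((τ - 1) / τ) • t)) ⇑f ((1 - τ)⁻¹ • x) (τ⁻¹ • ξ) :=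
  wig_eq_stft_dilation hτ.1 hτ.2.ne f x ξ
end
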